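/- Let R be a ring such that every left R-module of cardinality at most 2^{|R|+ℵ₀} is pure-injective. Then every left R-module is pure-injective, i.e., R is left pure-semisimple. -/

import Mathlib

open Cardinal

universe u v

def IsPureMap (R : Type u) [Ring R] {M N : Type v}
    [AddCommGroup M] [Module R M] [AddCommGroup N] [Module R N]
    (f : M →ₗ[R] N) : Prop :=
  ∀ (m k : ℕ) (a : Fin m → Fin k → R) (b : Fin m → M),
    (∃ x : Fin k → N, ∀ i, ∑ j, a i j • x j = f (b i)) →
    (∃ x : Fin k → M, ∀ i, ∑ j, a i j • x j = b i)

def PureInjective (R : Type u) [Ring R] (M : Type v) [AddCommGroup M] [Module R M] : Prop :=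
  ∀ (N : Type v) [AddCommGroup N] [Module R N], ∀ f : M →ₗ[R] N,
    Function.Injective f → IsPureMap R f → ∃ g : N →ₗ[R] M, g ∘ₗ f = LinearMap.id

/-!
A strictly descending chain of pp-definable subgroups of `M` is witnessed inside a countably
generated submodule `P`, and the small module `ℕ →₀ P` is pure-injective; a retraction of the pure
embedding `ℕ →₀ P → ℕ → P`, applied to the tails of the sequence of witnesses, contradicts
strictness. So `M` has the descending chain condition on pp-definable subgroups. This makes `M`
algebraically compact: by Zorn a finitely solvable system of linear equations extends to a maximal
one, and a minimal pp-definable set of admissible values lets it fix every unknown. Finally, a pure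
embedding `M → N` gives a finitely solvable system whose solutions are the retractions `N → M`.
-/
open Finsupp

/-- The pp formula `∃ x, rel x = 0 ∧ x free = y` in the free variable `y`. -/
structure PPFormula (R : Type u) [Ring R] where
  k : ℕ
  m : ℕ
  rel : Fin m → Fin k → R
  free : Fin k

namespace PPFormula

variable {R : Type u} [Ring R] (φ : PPFormula R)
variable {M : Type*} [AddCommGroup M] [Module R M] {N : Type*} [AddCommGroup N] [Module R N]

def eval (M : Type*) [AddCommGroup M] [Module R M] : Set M :=
  {y | ∃ x : Fin φ.k → M, (∀ i, ∑ j, φ.rel i j • x j = 0) ∧ x φ.free = y}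

theorem map_mem_eval (f : M →ₗ[R] N) {y : M} (hy : y ∈ φ.eval M) : f y ∈ φ.eval N := by
  obtain ⟨x, hx, rfl⟩ := hy
  exact ⟨f ∘ x, fun i => by simpa using congrArg f (hx i), rfl⟩

theorem neg_mem_eval {y : M} (hy : y ∈ φ.eval M) : -y ∈ φ.eval M := by
  simpa using φ.map_mem_eval (-LinearMap.id) hy

theorem zero_mem_eval : (0 : M) ∈ φ.eval M :=
  ⟨0, by simp, rfl⟩

theorem pi_mem_eval {ι : Type*} {y : ι → M} (hy : ∀ n, y n ∈ φ.eval M) :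
    y ∈ φ.eval (ι → M) := by
  choose x hx hxy using hy
  exact ⟨fun j n => x n j, fun i => funext fun n => by simpa using hx n i, funext hxy⟩

theorem mem_eval_submodule {P : Submodule R M} {y : P} {x : Fin φ.k → M}
    (hx : ∀ i, ∑ j, φ.rel i j • x j = 0) (hxy : x φ.free = y) (hxP : ∀ j, x j ∈ P) :
    y ∈ φ.eval P :=
  ⟨fun j => ⟨x j, hxP j⟩, fun i => Subtype.ext (by simpa using hx i), Subtype.ext hxy⟩

theorem exists_eval_eq {ι κ : Type*} [Fintype ι] [Fintype κ] (a : κ → ι → R) (i₀ : ι) :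
    ∃ φ : PPFormula R, φ.eval M = {y | ∃ x : ι → M, (∀ t, ∑ i, a t i • x i = 0) ∧ x i₀ = y} := by
  let eι := Fintype.equivFin ι
  let eκ := Fintype.equivFin κ
  refine ⟨⟨_, _, fun t j => a (eκ.symm t) (eι.symm j), eι i₀⟩, Set.ext fun y => ?_⟩
  have hsum : ∀ (t : κ) (x : ι → M), ∑ j, a t (eι.symm j) • x (eι.symm j) = ∑ i, a t i • x i :=
    fun t x => eι.symm.sum_comp fun i => a t i • x i
  constructor
  · rintro ⟨x, hx, rfl⟩
    refine ⟨x ∘ eι, fun t => ?_, rfl⟩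
    simpa [← hsum t, Function.comp_apply] using hx (eκ t)
  · rintro ⟨x, hx, rfl⟩
    exact ⟨x ∘ eι.symm, fun t => by simpa [Function.comp_apply, hsum] using hx (eκ.symm t),
      by simp⟩

end PPFormula

section PureMap

variable {R : Type u} [Ring R] {M N : Type v} [AddCommGroup M] [Module R M]
  [AddCommGroup N] [Module R N]

theorem IsPureMap.exists_solution {f : M →ₗ[R] N} (hf : IsPureMap R f)
    {ι κ : Type*} [Fintype ι] [Fintype κ] (a : κ → ι → R) (b : κ → M) (x : ι → N)
    (hx : ∀ t, ∑ i, a t i • x i = f (b t)) : ∃ y : ι → M, ∀ t, ∑ i, a t i • y i = b t := by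
  let eι := Fintype.equivFin ι
  let eκ := Fintype.equivFin κ
  have hsum : ∀ {P : Type v} [AddCommGroup P] [Module R P] (t : κ) (z : ι → P),
      ∑ j, a t (eι.symm j) • z (eι.symm j) = ∑ i, a t i • z i :=
    fun t z => eι.symm.sum_comp fun i => a t i • z i
  obtain ⟨y, hy⟩ := hf _ _ (fun t j => a (eκ.symm t) (eι.symm j)) (b ∘ eκ.symm)
    ⟨x ∘ eι.symm, fun t => by simpa [Function.comp_apply, hsum] using hx (eκ.symm t)⟩
  exact ⟨y ∘ eι, fun t => by simpa [← hsum t, Function.comp_apply] using hy (eκ t)⟩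

theorem isPureMap_of_forall_exists_retraction (f : M →ₗ[R] N)
    (h : ∀ (m : ℕ) (b : Fin m → M), ∃ g : N →ₗ[R] M, ∀ i, g (f (b i)) = b i) :
    IsPureMap R f := by
  rintro m k a b ⟨x, hx⟩
  obtain ⟨g, hg⟩ := h m b
  exact ⟨g ∘ x, fun i => by simpa [hg] using congrArg g (hx i)⟩

theorem isPureMap_lcoeFun (ι : Type) : IsPureMap R (lcoeFun : (ι →₀ M) →ₗ[R] ι → M) := by
  classical
  refine isPureMap_of_forall_exists_retraction _ fun m b => ?_
  let T := Finset.univ.biUnion fun i => (b i).support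
  refine ⟨∑ n ∈ T, lsingle n ∘ₗ LinearMap.proj n, fun i => ?_⟩
  have hbT : (b i).support ⊆ T :=
    Finset.subset_biUnion_of_mem (fun i => (b i).support) (Finset.mem_univ i)
  simpa using ((b i).sum_of_support_subset hbT (fun n y => single n y) (by simp)).symm.trans
    (b i).sum_single

end PureMap

/-- Push the tails `(0, …, 0, u k, u (k + 1), …) ∈ (φ k).eval (ℕ → M)` through a retraction onto
`ℕ →₀ M`: at a coordinate `j` outside the support of the image of the whole sequence, `u j` is
minus the `j`-th coordinate of the image of the `(j + 1)`-st tail. -/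
theorem PPFormula.exists_mem_eval_succ {R : Type u} [Ring R] {M : Type v} [AddCommGroup M]
    [Module R M] (hM : PureInjective R (ℕ →₀ M)) (φ : ℕ → PPFormula R) (u : ℕ → M)
    (hu : ∀ k n, k ≤ n → u n ∈ (φ k).eval M) : ∃ j, u j ∈ (φ (j + 1)).eval M := by
  classical
  obtain ⟨g, hg⟩ := hM _ (lcoeFun (R := R)) DFunLike.coe_injective (isPureMap_lcoeFun ℕ)
  let tail (k : ℕ) : ℕ → M := fun n => if k ≤ n then u n else 0
  have htail_mem (k : ℕ) : tail k ∈ (φ k).eval (ℕ → M) :=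
    (φ k).pi_mem_eval fun n => by
      by_cases hkn : k ≤ n
      · simpa [tail, hkn] using hu k n hkn
      · simpa [tail, hkn] using (φ k).zero_mem_eval
  let z (k : ℕ) : ℕ →₀ M := g (tail k)
  have hz_succ (k : ℕ) : z k = single k (u k) + z (k + 1) := by
    have : tail k = lcoeFun (R := R) (single k (u k)) + tail (k + 1) := by
      ext n
      simp only [tail, Pi.add_apply, lcoeFun_apply, single_apply]
      split_ifs <;> first | omega | (subst_vars; simp)
    simp only [z, this, map_add, ← LinearMap.comp_apply, hg, LinearMap.id_apply]
  have hz_eq (j : ℕ) : ∀ k ≤ j, z 0 j = z k j := by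
    intro k hk
    induction k with
    | zero => rfl
    | succ k ih => simpa [hz_succ k, single_apply, (Nat.lt_of_succ_le hk).ne] using ih (by omega)
  obtain ⟨j, hj⟩ := Infinite.exists_notMem_finset (z 0).support
  have hzj : u j = -z (j + 1) j := by
    have h0 := (hz_eq j j le_rfl).symm.trans (notMem_support_iff.mp hj)
    rw [hz_succ j, Finsupp.add_apply, single_eq_same] at h0
    exact eq_neg_of_add_eq_zero_left h0
  refine ⟨j, hzj ▸ (φ (j + 1)).neg_mem_eval ?_⟩
  exact (φ (j + 1)).map_mem_eval (lapply j) ((φ (j + 1)).map_mem_eval g (htail_mem (j + 1)))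

theorem Cardinal.mk_finsupp_le_max (α : Type u) (β : Type v) [Zero β] :
    #(α →₀ β) ≤ max (max (lift.{v} #α) (lift.{u} #β)) ℵ₀ := by
  classical
  calc #(α →₀ β) ≤ #(Finset (α × β)) := mk_le_of_injective (Finsupp.graph_injective α β)
    _ ≤ #(List (α × β)) := mk_le_of_surjective List.toFinset_surjective
    _ ≤ max ℵ₀ (lift.{v} #α * lift.{u} #β) := by simpa using mk_list_le_max (α × β)
    _ ≤ max (max (lift.{v} #α) (lift.{u} #β)) ℵ₀ :=
      max_le (le_max_right _ _) (mul_le_max _ _)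

theorem Cardinal.mk_finsupp_nat_span_le {R : Type u} [Ring R] {M : Type u} [AddCommGroup M]
    [Module R M] {S : Set M} (hS : S.Countable) : #(ℕ →₀ Submodule.span R S) ≤ #R + ℵ₀ := by
  have hspan : #(Submodule.span R S) ≤ #R + ℵ₀ :=
    calc #(Submodule.span R S) ≤ #(S →₀ R) := by
          refine mk_le_of_surjective (f := fun c => ⟨linearCombination R (↑) c,
            (mem_span_iff_linearCombination R S _).2 ⟨c, rfl⟩⟩) fun x => ?_
          obtain ⟨c, hc⟩ := (mem_span_iff_linearCombination R S x).1 x.2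
          exact ⟨c, Subtype.ext hc⟩
      _ ≤ max (max #S #R) ℵ₀ := by simpa using mk_finsupp_le_max S R
      _ ≤ #R + ℵ₀ := by
          rw [add_eq_max' le_rfl]
          exact max_le (max_le ((le_aleph0_iff_set_countable.2 hS).trans (le_max_right _ _))
            (le_max_left _ _)) (le_max_right _ _)
  calc #(ℕ →₀ Submodule.span R S) ≤ max (max ℵ₀ #(Submodule.span R S)) ℵ₀ := by
        simpa using mk_finsupp_le_max ℕ (Submodule.span R S)
    _ ≤ #R + ℵ₀ := max_le (max_le le_add_self hspan) le_add_self

theorem PPFormula.wellFounded_eval_ssubset {R : Type u} [Ring R]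
    (h : ∀ (D : Type u) [AddCommGroup D] [Module R D], #D ≤ #R + ℵ₀ → PureInjective R D)
    (M : Type u) [AddCommGroup M] [Module R M] :
    WellFounded fun φ ψ : PPFormula R => φ.eval M ⊂ ψ.eval M := by
  refine wellFounded_iff_isEmpty_descending_chain.2 ⟨fun ⟨φ, hφ⟩ => ?_⟩
  choose u hu hu' using fun n => Set.exists_of_ssubset (hφ n)
  have hanti : Antitone fun n => (φ n).eval M := antitone_nat_of_succ_le fun n => (hφ n).subset
  choose w hw hwu using fun n k => show ∃ x : Fin (φ k).k → M,
      k ≤ n → (∀ i, ∑ j, (φ k).rel i j • x j = 0) ∧ x (φ k).free = u n from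
    if hkn : k ≤ n then (hanti hkn (hu n)).imp fun _ hx _ => hx else ⟨0, fun h => (hkn h).elim⟩
  let S : Set M := ⋃ n, ⋃ k, Set.range (w n k)
  have hS : S.Countable := Set.countable_iUnion fun n => Set.countable_iUnion fun k =>
    Set.countable_range _
  have hwS (n k j) : w n k j ∈ Submodule.span R S :=
    Submodule.subset_span (Set.mem_iUnion₂.2 ⟨n, k, j, rfl⟩)
  let u₀ (n : ℕ) : Submodule.span R S := ⟨u n, hwu n n le_rfl ▸ hwS n n _⟩
  obtain ⟨j, hj⟩ := PPFormula.exists_mem_eval_succ (h _ (mk_finsupp_nat_span_le hS)) φ u₀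
    fun k n hkn => (φ k).mem_eval_submodule (hw n k hkn) (hwu n k hkn) (hwS n k)
  exact hu' j (by simpa [u₀] using (φ (j + 1)).map_mem_eval (Submodule.subtype _) hj)

section Equations

variable {R : Type u} [Ring R] {X : Type*}

theorem Finsupp.linearCombination_eq_sum_coe_sort {M : Type*} [AddCommGroup M] [Module R M]
    {W : Finset X} {c : X →₀ R} (hc : c.support ⊆ W) (s : X → M) :
    linearCombination R s c = ∑ w : W, c w • s w := by
  rw [linearCombination_apply_of_mem_supported R ((mem_supported R c).2 (by simpa using hc)),
    ← Finset.sum_coe_sort]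

theorem Finsupp.linearCombination_congr_left {M : Type*} [AddCommGroup M] [Module R M]
    {s t : X → M} {c : X →₀ R} (h : ∀ x ∈ c.support, s x = t x) :
    linearCombination R s c = linearCombination R t c := by
  simp only [linearCombination_apply]
  exact Finsupp.sum_congr fun x hx => by rw [h x hx]

theorem Finsupp.linearCombination_add_left {M : Type*} [AddCommGroup M] [Module R M]
    (s t : X → M) (c : X →₀ R) :
    linearCombination R (s + t) c = linearCombination R s c + linearCombination R t c := by
  simp [linearCombination_apply, smul_add, Finsupp.sum_add]

theorem Finsupp.linearCombination_sub_left {M : Type*} [AddCommGroup M] [Module R M]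
    (s t : X → M) (c : X →₀ R) :
    linearCombination R (s - t) c = linearCombination R s c - linearCombination R t c := by
  simp [linearCombination_apply, smul_sub, Finsupp.sum_sub]

theorem IsPureMap.exists_solution_of_finset {M N : Type v} [AddCommGroup M] [Module R M]
    [AddCommGroup N] [Module R N] {f : M →ₗ[R] N} (hf : IsPureMap R f)
    (F : Finset ((X →₀ R) × M)) (t : X → N) (ht : ∀ e ∈ F, linearCombination R t e.1 = f e.2) :
    ∃ s : X → M, ∀ e ∈ F, linearCombination R s e.1 = e.2 := by
  classical
  let W := F.biUnion fun e => e.1.support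
  have hW {e} (he : e ∈ F) : e.1.support ⊆ W :=
    Finset.subset_biUnion_of_mem (fun e => e.1.support) he
  obtain ⟨y, hy⟩ := hf.exists_solution (fun (e : F) (w : W) => (e : (X →₀ R) × M).1 w)
    (fun e => (e : (X →₀ R) × M).2) (fun w => t w)
    fun e => by rw [← linearCombination_eq_sum_coe_sort (hW e.2), ht e e.2]
  refine ⟨Function.extend (↑) y 0, fun e he => ?_⟩
  rw [linearCombination_eq_sum_coe_sort (hW he), ← hy ⟨e, he⟩]
  simp

variable {M : Type*} [AddCommGroup M] [Module R M]

theorem PPFormula.exists_eval_eq_solutions (C : Finset (X →₀ R)) (x₀ : X) :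
    ∃ φ : PPFormula R,
      φ.eval M = {y | ∃ s : X → M, (∀ c ∈ C, linearCombination R s c = 0) ∧ s x₀ = y} := by
  classical
  let W := insert x₀ (C.biUnion fun c => c.support)
  have hW {c} (hc : c ∈ C) : c.support ⊆ W :=
    (Finset.subset_biUnion_of_mem (fun c => c.support) hc).trans (Finset.subset_insert _ _)
  obtain ⟨φ, hφ⟩ := PPFormula.exists_eval_eq (M := M) (fun (c : C) (w : W) => (c : X →₀ R) w)
    ⟨x₀, Finset.mem_insert_self _ _⟩
  refine ⟨φ, hφ.trans (Set.ext fun y => ⟨?_, ?_⟩)⟩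
  · rintro ⟨x, hx, rfl⟩
    refine ⟨Function.extend (↑) x 0, fun c hc => ?_,
      Subtype.val_injective.extend_apply x 0 ⟨x₀, Finset.mem_insert_self _ _⟩⟩
    rw [linearCombination_eq_sum_coe_sort (hW hc), ← hx ⟨c, hc⟩]
    simp
  · rintro ⟨s, hs, rfl⟩
    exact ⟨fun w => s w, fun c => by rw [← linearCombination_eq_sum_coe_sort (hW c.2), hs c c.2],
      rfl⟩

end Equations

section Compactness

variable {R : Type u} [Ring R] {M : Type*} [AddCommGroup M] [Module R M] {X : Type*}

/-- `(c, m)` encodes the linear equation `∑ x, c x • s x = m` in the unknowns `s : X → M`. -/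
def FinitelySolvable (𝓔 : Set ((X →₀ R) × M)) : Prop :=
  ∀ F : Finset ((X →₀ R) × M), ↑F ⊆ 𝓔 → ∃ s : X → M, ∀ e ∈ F, linearCombination R s e.1 = e.2

theorem FinitelySolvable.sUnion {𝓒 : Set (Set ((X →₀ R) × M))} (hne : 𝓒.Nonempty)
    (hchain : IsChain (· ⊆ ·) 𝓒) (h : ∀ 𝓔 ∈ 𝓒, FinitelySolvable 𝓔) :
    FinitelySolvable (⋃₀ 𝓒) := fun F hF => by
  obtain ⟨𝓔, h𝓔, hF𝓔⟩ :=
    hchain.directedOn.exists_mem_subset_of_finite_of_subset_sUnion hne F.finite_toSet hF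
  exact h 𝓔 h𝓔 F hF𝓔

/-- Choose a finite subsystem `F₀` whose homogeneous solutions take a minimal pp-definable set
`G F₀` of values at `x₀`; the value at `x₀` of any solution of `F₀` is then compatible with
every finite subsystem, since solutions of larger systems differ by homogeneous solutions. -/
theorem FinitelySolvable.exists_insert_single
    (hwf : WellFounded fun φ ψ : PPFormula R => φ.eval M ⊂ ψ.eval M)
    {𝓔 : Set ((X →₀ R) × M)} (h𝓔 : FinitelySolvable 𝓔) (x₀ : X) :
    ∃ v, FinitelySolvable (insert (single x₀ 1, v) 𝓔) := by
  classical
  let G (F : Finset ((X →₀ R) × M)) : Set M :=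
    {y | ∃ s : X → M, (∀ c ∈ F.image Prod.fst, linearCombination R s c = 0) ∧ s x₀ = y}
  obtain ⟨φ₀, ⟨F₀, hF₀, hφ₀⟩, hmin⟩ := hwf.has_min {φ | ∃ F, ↑F ⊆ 𝓔 ∧ φ.eval M = G F}
    ⟨_, ∅, by simp, (PPFormula.exists_eval_eq_solutions _ x₀).choose_spec⟩
  have hG_eq (F : Finset ((X →₀ R) × M)) (hF : ↑F ⊆ 𝓔) (hF₀F : F₀ ⊆ F) : G F = G F₀ := by
    obtain ⟨φ, hφ⟩ := PPFormula.exists_eval_eq_solutions (M := M) (F.image Prod.fst) x₀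
    have hsub : G F ⊆ G F₀ := fun y ⟨s, hs, hsy⟩ =>
      ⟨s, fun c hc => hs c (Finset.image_subset_image hF₀F hc), hsy⟩
    exact hsub.ssubset_or_eq.resolve_left fun hss => hmin φ ⟨F, hF, hφ⟩ (by rwa [hφ, hφ₀])
  obtain ⟨s₀, hs₀⟩ := h𝓔 F₀ hF₀
  refine ⟨s₀ x₀, fun F hF => ?_⟩
  let F' := F.erase (single x₀ 1, s₀ x₀) ∪ F₀
  have hF' : ↑F' ⊆ 𝓔 := by
    simpa [F', Set.sdiff_singleton_subset_iff] using ⟨hF, hF₀⟩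
  obtain ⟨s₁, hs₁⟩ := h𝓔 F' hF'
  have hδ : s₀ x₀ - s₁ x₀ ∈ G F' := by
    refine hG_eq F' hF' Finset.subset_union_right ▸ ⟨s₀ - s₁, fun c hc => ?_, rfl⟩
    obtain ⟨e, he, rfl⟩ := Finset.mem_image.1 hc
    rw [linearCombination_sub_left, hs₀ e he, hs₁ e (Finset.mem_union_right _ he), sub_self]
  obtain ⟨t, ht, htx⟩ := hδ
  refine ⟨s₁ + t, fun e he => ?_⟩
  rw [linearCombination_add_left]
  by_cases he₀ : e = (single x₀ 1, s₀ x₀)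
  · subst he₀
    simp [htx]
  · have heF' : e ∈ F' := Finset.mem_union_left _ (Finset.mem_erase.2 ⟨he₀, he⟩)
    rw [hs₁ e heF', ht e.1 (Finset.mem_image_of_mem _ heF'), add_zero]

theorem FinitelySolvable.exists_solution
    (hwf : WellFounded fun φ ψ : PPFormula R => φ.eval M ⊂ ψ.eval M)
    {𝓔 : Set ((X →₀ R) × M)} (h𝓔 : FinitelySolvable 𝓔) :
    ∃ s : X → M, ∀ e ∈ 𝓔, linearCombination R s e.1 = e.2 := by
  classical
  obtain ⟨𝓜, h𝓔𝓜, hmax⟩ := zorn_subset_nonempty {𝓕 | FinitelySolvable 𝓕}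
    (fun 𝓒 h𝓒 hchain hne => ⟨⋃₀ 𝓒, sUnion hne hchain h𝓒, fun _ => Set.subset_sUnion_of_mem⟩)
    𝓔 h𝓔
  choose s hs using fun x =>
    (hmax.prop.exists_insert_single hwf x).imp fun _ hv => hmax.mem_of_prop_insert hv
  refine ⟨s, fun e he => ?_⟩
  obtain ⟨s', hs'⟩ := hmax.prop (insert e (e.1.support.image fun x => (single x 1, s x))) (by
    rw [Finset.coe_insert, Set.insert_subset_iff, Finset.coe_image, Set.image_subset_iff]
    exact ⟨h𝓔𝓜 he, fun x _ => hs x⟩)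
  have hss' (x) (hx : x ∈ e.1.support) : s x = s' x := by
    simpa using (hs' _ (Finset.mem_insert_of_mem (Finset.mem_image_of_mem _ hx))).symm
  rw [linearCombination_congr_left hss', hs' e (Finset.mem_insert_self _ _)]

end Compactness

theorem pureInjective_of_wellFounded {R : Type u} [Ring R] {M : Type v} [AddCommGroup M]
    [Module R M] (hwf : WellFounded fun φ ψ : PPFormula R => φ.eval M ⊂ ψ.eval M) :
    PureInjective R M := by
  intro N _ _ f _ hf
  obtain ⟨s, hs⟩ := FinitelySolvable.exists_solution hwf
    (𝓔 := {e : (N →₀ R) × M | linearCombination R id e.1 = f e.2})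
    fun F hF => hf.exists_solution_of_finset F id fun e he => hF he
  have hker (c : N →₀ R) (hc : linearCombination R id c = 0) : linearCombination R s c = 0 :=
    hs (c, 0) (by simpa using hc)
  refine ⟨{ toFun := s, map_add' := fun a b => ?_, map_smul' := fun r a => ?_ },
    LinearMap.ext fun m => ?_⟩
  · have := hker (single a 1 + single b 1 - single (a + b) 1) (by simp)
    simp only [map_sub, map_add, linearCombination_single, one_smul, sub_eq_zero] at this
    exact this.symm
  · have := hker (single a r - single (r • a) 1) (by simp)
    simp only [map_sub, linearCombination_single, one_smul, sub_eq_zero] at this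
    exact this.symm
  · simpa using hs (single (f m) 1, m) (by simp)

/-- If every left `R`-module of cardinality at most `2 ^ (|R| + ℵ₀)` is pure-injective,
then every left `R`-module is pure-injective. -/
theorem pureSemisimple_of_small_pureInjective (R : Type u) [Ring R]
    (h : ∀ (M : Type u) [AddCommGroup M] [Module R M],
      #M ≤ 2 ^ (#R + ℵ₀) → PureInjective R M) :
    ∀ (M : Type u) [AddCommGroup M] [Module R M], PureInjective R M := by
  intro M _ _
  have hsmall (D : Type u) [AddCommGroup D] [Module R D] (hD : #D ≤ #R + ℵ₀) :
      PureInjective R D :=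
    h D (hD.trans (cantor _).le)
  exact pureInjective_of_wellFounded (PPFormula.wellFounded_eval_ssubset hsmall M)
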